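/- arXiv:1304.3385 — 7 statements merged into one kernel-verified Lean document; each statement's English description precedes it below -/
import Mathlib

section
/- Let X be a finite-dimensional real normed linear space admitting only finitely many surjective linear isometries, and let (G,p) be a bar-joint framework in X. Then u∈X^n is a trivial infinitesimal flex of (G,p) (i.e., induced by a rigid motion of X) if and only if u=(a,a,…,a) for some a∈X. -/
open Filter

/-- An infinitesimal flex of the bar-joint framework `(G, p)` in a normed space `X`. -/
def IsInfFlex {X : Type*} [NormedAddCommGroup X] [NormedSpace ℝ X] {n : ℕ}
    (G : SimpleGraph (Fin n)) (p u : Fin n → X) : Prop :=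
  ∀ i j, G.Adj i j →
    (fun t : ℝ => ‖(p i + t • u i) - (p j + t • u j)‖ - ‖p i - p j‖)
      =o[nhds (0 : ℝ)] (fun t : ℝ => t)

/-- A rigid motion of a normed space `X`. -/
def IsRigidMotion {X : Type*} [NormedAddCommGroup X] [NormedSpace ℝ X]
    (γ : X → ℝ → X) : Prop :=
  (∀ x, ContinuousOn (γ x) (Set.Icc (-1 : ℝ) 1)) ∧
  (∀ x, γ x 0 = x) ∧
  (∀ x, DifferentiableAt ℝ (γ x) 0) ∧
  (∀ t ∈ Set.Icc (-1 : ℝ) 1, ∀ x y, ‖γ x t - γ y t‖ = ‖x - y‖)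

/-- A trivial infinitesimal flex: one induced by a rigid motion of the space. -/
def IsTrivialFlex {X : Type*} [NormedAddCommGroup X] [NormedSpace ℝ X] {n : ℕ}
    (G : SimpleGraph (Fin n)) (p u : Fin n → X) : Prop :=
  IsInfFlex G p u ∧ ∃ γ : X → ℝ → X, IsRigidMotion γ ∧ ∀ i, u i = deriv (γ (p i)) 0

/-- A distance-preserving self-map of a finite-dimensional normed space fixing 0
is surjective. -/
lemma isometry_self_surjective {X : Type*} [NormedAddCommGroup X] [NormedSpace ℝ X]
    [FiniteDimensional ℝ X] (f : X → X) (hf : Isometry f) (h0 : f 0 = 0) :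
    Function.Surjective f := by
  intro y
  by_contra hy
  push_neg at hy
  set r : ℝ := ‖y‖ with hr
  set K : Set X := Metric.closedBall 0 r with hK
  have hKc : IsCompact K := isCompact_closedBall 0 r
  have hmap : ∀ x ∈ K, f x ∈ K := by
    intro x hx
    simp only [hK, Metric.mem_closedBall, dist_zero_right] at *
    have : ‖f x - f 0‖ = ‖x - 0‖ := by
      have := hf.dist_eq x 0
      simpa [dist_eq_norm] using this
    simpa [h0] using this.le.trans (by simpa using hx)
  -- the compact image
  have himc : IsCompact (f '' K) := hKc.image hf.continuous
  have hyK : y ∈ K := by simp [hK, hr]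
  have hyim : y ∉ f '' K := by
    rintro ⟨x, -, hx⟩; exact hy x hx
  have hne : (f '' K).Nonempty := ⟨f 0, 0, by simp only [hK, Metric.mem_closedBall, dist_zero_right, norm_zero]; exact norm_nonneg y, rfl⟩
  have himcl : IsClosed (f '' K) := himc.isClosed
  obtain ⟨ε, hε, hsep⟩ : ∃ ε > 0, ∀ z ∈ f '' K, ε ≤ dist y z := by
    have hd : 0 < Metric.infDist y (f '' K) :=
      (himcl.notMem_iff_infDist_pos hne).mp hyim
    exact ⟨_, hd, fun z hz => Metric.infDist_le_dist_of_mem hz⟩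
  -- iterate f
  set z : ℕ → X := fun n => f^[n] y with hz
  have hzK : ∀ n, z n ∈ K := by
    intro n
    induction n with
    | zero => simpa [hz] using hyK
    | succ k ih =>
        have : z (k+1) = f (z k) := by simp only [hz]; rw [Function.iterate_succ_apply']
        rw [this]; exact hmap _ ih
  have hdist : ∀ m k, 0 < k → ε ≤ dist (z m) (z (m + k)) := by
    intro m k hk
    have h1 : dist (z m) (z (m + k)) = dist y (z k) := by
      have : ∀ a b : X, dist (f^[m] a) (f^[m] b) = dist a b := by
        intro a b
        induction m with
        | zero => simp
        | succ j ih => rw [Function.iterate_succ_apply', Function.iterate_succ_apply',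
            hf.dist_eq]; exact ih
      calc dist (z m) (z (m + k)) = dist (f^[m] y) (f^[m] (z k)) := by
            congr 1
            show f^[m+k] y = f^[m] (f^[k] y)
            rw [add_comm, Function.iterate_add_apply, Function.Commute.iterate_iterate_self f m k y]
        _ = dist y (z k) := this _ _
    rw [h1]
    apply hsep
    obtain ⟨k', rfl⟩ := Nat.exists_eq_succ_of_ne_zero hk.ne'
    have : z (k' + 1) = f (z k') := by simp only [hz]; rw [Function.iterate_succ_apply']
    rw [this]
    exact Set.mem_image_of_mem f (hzK k')
  obtain ⟨a, -, φ, hφ, hconv⟩ := hKc.tendsto_subseq hzK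
  have hc : CauchySeq (z ∘ φ) := hconv.cauchySeq
  obtain ⟨N, hN⟩ := Metric.cauchySeq_iff'.mp hc ε hε
  have h1 := hN (N + 1) (Nat.le_succ N)
  have h2 : ε ≤ dist (z (φ (N+1))) (z (φ N)) := by
    rw [dist_comm]
    have hlt : φ N < φ (N+1) := hφ (Nat.lt_succ_self N)
    have := hdist (φ N) (φ (N+1) - φ N) (Nat.sub_pos_of_lt hlt)
    rwa [Nat.add_sub_cancel' hlt.le] at this
  exact absurd h1 (not_lt.mpr h2)



/-- Under the finiteness hypothesis, a rigid motion is a translation-like family: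
`γ x t = x + γ 0 t` on `[-1, 1]`. -/
lemma rigid_motion_translation {X : Type*} [NormedAddCommGroup X] [NormedSpace ℝ X]
    [FiniteDimensional ℝ X] (hfin : Finite (X ≃ₗᵢ[ℝ] X)) {γ : X → ℝ → X}
    (hγ : IsRigidMotion γ) : ∀ x, ∀ t ∈ Set.Icc (-1 : ℝ) 1, γ x t - γ 0 t = x := by
  obtain ⟨hcont, h0, hdiff, hiso⟩ := hγ
  -- For each `t ∈ [-1,1]`, `fun w => γ w t - γ 0 t` is a surjective isometry fixing `0`,
  -- hence a linear isometry equivalence by Mazur–Ulam.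
  have key : ∀ t ∈ Set.Icc (-1 : ℝ) 1, ∃ A : X ≃ₗᵢ[ℝ] X, ∀ w, A w = γ w t - γ 0 t := by
    intro t ht
    set f : X → X := fun w => γ w t - γ 0 t with hfdef
    have hfi : Isometry f := by
      apply Isometry.of_dist_eq
      intro a b
      simp only [hfdef, dist_eq_norm, sub_sub_sub_cancel_right]
      exact hiso t ht a b
    have hf0 : f 0 = 0 := by simp [hfdef]
    have hsurj : Function.Surjective f := isometry_self_surjective f hfi hf0
    let e : X ≃ᵢ X := ⟨Equiv.ofBijective f ⟨hfi.injective, hsurj⟩, hfi⟩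
    have he : ⇑e = f := rfl
    refine ⟨e.toRealLinearIsometryEquivOfMapZero (by rw [he]; exact hf0), fun w => ?_⟩
    rw [IsometryEquiv.coe_toRealLinearIsometryEquivOfMapZero, he]
  -- Continuity plus finiteness of the isometry group forces `γ x t - γ 0 t = x`.
  intro x t ht
  set S : Set X := Set.range (fun A : X ≃ₗᵢ[ℝ] X => A x) with hS
  have hSfin : S.Finite := Set.finite_range _
  set g : ℝ → X := fun s => γ x s - γ 0 s with hg
  have hgc : ContinuousOn g (Set.Icc (-1 : ℝ) 1) := (hcont x).sub (hcont 0)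
  have hgS : Set.MapsTo g (Set.Icc (-1 : ℝ) 1) S := by
    intro s hs
    obtain ⟨A, hA⟩ := key s hs
    exact ⟨A, (hA x)⟩
  -- image of the connected interval is preconnected and finite, hence a subsingleton
  have hpre : IsPreconnected (g '' Set.Icc (-1 : ℝ) 1) :=
    (isPreconnected_Icc).image g hgc
  have hsub : (g '' Set.Icc (-1 : ℝ) 1).Subsingleton := by
    by_contra hns
    rw [Set.not_subsingleton_iff] at hns
    exact (hSfin.subset (Set.image_subset_iff.mpr hgS)).not_infinite
      (hpre.infinite_of_nontrivial hns)
  have h0mem : g 0 ∈ g '' Set.Icc (-1 : ℝ) 1 :=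
    Set.mem_image_of_mem g (by constructor <;> norm_num)
  have htmem : g t ∈ g '' Set.Icc (-1 : ℝ) 1 := Set.mem_image_of_mem g ht
  have : g t = g 0 := hsub htmem h0mem
  rw [hg] at this
  simpa [h0] using this

theorem trivial_flex_iff_constant {X : Type*} [NormedAddCommGroup X] [NormedSpace ℝ X]
    [FiniteDimensional ℝ X] (hfin : Finite (X ≃ₗᵢ[ℝ] X))
    {n : ℕ} (G : SimpleGraph (Fin n)) (p : Fin n → X) (u : Fin n → X) :
    IsTrivialFlex G p u ↔ ∃ a : X, ∀ i, u i = a := by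
  constructor
  · rintro ⟨-, γ, hγ, hu⟩
    refine ⟨deriv (γ 0) 0, fun i => ?_⟩
    rw [hu i]
    have htrans := rigid_motion_translation hfin hγ
    have hev : γ (p i) =ᶠ[nhds (0 : ℝ)] fun t => p i + γ 0 t := by
      have hsub : Set.Ioo (-1 : ℝ) 1 ∈ nhds (0 : ℝ) :=
        Ioo_mem_nhds (by norm_num) (by norm_num)
      filter_upwards [hsub] with t ht
      have := htrans (p i) t ⟨ht.1.le, ht.2.le⟩
      rw [sub_eq_iff_eq_add] at this
      rw [this, add_comm]
    rw [hev.deriv_eq, deriv_const_add]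
  · rintro ⟨a, ha⟩
    constructor
    · intro i j hij
      have hzero : (fun t : ℝ => ‖(p i + t • u i) - (p j + t • u j)‖ - ‖p i - p j‖)
          = fun _ => (0 : ℝ) := by
        funext t
        rw [ha i, ha j, show (p i + t • a) - (p j + t • a) = p i - p j from by abel, sub_self]
      rw [hzero]
      exact Asymptotics.isLittleO_zero _ _
    · refine ⟨fun x t => x + t • a, ⟨?_, ?_, ?_, ?_⟩, ?_⟩
      · intro x
        exact (continuous_const.add (continuous_id.smul continuous_const)).continuousOn
      · intro x; simp
      · intro x
        exact ((differentiableAt_fun_id.smul_const a)).const_add x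
      · intro t ht x y
        congr 1
        exact add_sub_add_right_eq_sub x y (t • a)
      · intro i
        rw [ha i]
        have hd : HasDerivAt (fun t : ℝ => p i + t • a) ((1 : ℝ) • a) 0 :=
          ((hasDerivAt_id (0 : ℝ)).smul_const a).const_add (p i)
        rw [hd.deriv, one_smul]
end

section
/- Let 1<q<∞, q≠2, and let p_1,p_2,p_3∈ℝ^2. Then p_1,p_2,p_3 are non-collinear if and only if the vectors (p_1−p_2)^{(q-1)} and (p_1−p_3)^{(q-1)} are linearly independent in ℝ^2. -/
/-- Coordinatewise signed power `a^{(k)}`. -/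
noncomputable def signedPow (k : ℝ) {d : ℕ} (a : Fin d → ℝ) : Fin d → ℝ :=
  fun i => Real.sign (a i) * |a i| ^ k

noncomputable def gk (k x : ℝ) : ℝ := Real.sign x * |x| ^ k

lemma real_sign_mul (x y : ℝ) : Real.sign (x * y) = Real.sign x * Real.sign y := by
  rcases lt_trichotomy x 0 with hx | rfl | hx <;> rcases lt_trichotomy y 0 with hy | rfl | hy <;>
    simp [Real.sign_of_neg, Real.sign_of_pos, Real.sign_zero, mul_pos,
      mul_neg_of_neg_of_pos, mul_neg_of_pos_of_neg, mul_pos_of_neg_of_neg, *]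

lemma gk_mul (k x y : ℝ) : gk k (x * y) = gk k x * gk k y := by
  unfold gk
  rw [real_sign_mul, abs_mul, Real.mul_rpow (abs_nonneg x) (abs_nonneg y)]
  ring

lemma gk_eq_zero {k x : ℝ} (hk : 0 < k) (h : gk k x = 0) : x = 0 := by
  unfold gk at h
  rcases mul_eq_zero.mp h with h | h
  · exact Real.sign_eq_zero_iff.mp h
  · exact abs_eq_zero.mp ((Real.rpow_eq_zero (abs_nonneg x) hk.ne').mp h)

lemma gk_inj {k : ℝ} (hk : 0 < k) : Function.Injective (gk k) := by
  intro x y h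
  rcases eq_or_ne x 0 with rfl | hx
  · exact (gk_eq_zero hk (by rw [← h]; simp [gk])).symm
  rcases eq_or_ne y 0 with rfl | hy
  · exact absurd (gk_eq_zero hk (by simpa [gk] using h)) hx
  have hxp : (0:ℝ) < |x| ^ k := Real.rpow_pos_of_pos (abs_pos.mpr hx) k
  have hyp : (0:ℝ) < |y| ^ k := Real.rpow_pos_of_pos (abs_pos.mpr hy) k
  unfold gk at h
  rcases hx.lt_or_gt with hx' | hx' <;> rcases hy.lt_or_gt with hy' | hy'
  · rw [Real.sign_of_neg hx', Real.sign_of_neg hy'] at h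
    have h2 : |x| ^ k = |y| ^ k := by linarith
    have h3 : |x| = |y| := le_antisymm
      ((Real.rpow_le_rpow_iff (abs_nonneg x) (abs_nonneg y) hk).mp h2.le)
      ((Real.rpow_le_rpow_iff (abs_nonneg y) (abs_nonneg x) hk).mp h2.ge)
    rw [abs_of_neg hx', abs_of_neg hy'] at h3; linarith
  · rw [Real.sign_of_neg hx', Real.sign_of_pos hy'] at h; nlinarith
  · rw [Real.sign_of_pos hx', Real.sign_of_neg hy'] at h; nlinarith
  · rw [Real.sign_of_pos hx', Real.sign_of_pos hy'] at h
    have h2 : |x| ^ k = |y| ^ k := by linarith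
    have h3 : |x| = |y| := le_antisymm
      ((Real.rpow_le_rpow_iff (abs_nonneg x) (abs_nonneg y) hk).mp h2.le)
      ((Real.rpow_le_rpow_iff (abs_nonneg y) (abs_nonneg x) hk).mp h2.ge)
    rw [abs_of_pos hx', abs_of_pos hy'] at h3; linarith

lemma li_iff (v w : Fin 2 → ℝ) :
    LinearIndependent ℝ ![v, w] ↔ v 0 * w 1 - v 1 * w 0 ≠ 0 := by
  have h : ![v, w] = (Matrix.of ![v, w]).row := rfl
  rw [h, Matrix.linearIndependent_rows_iff_isUnit, Matrix.isUnit_iff_isUnit_det,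
    isUnit_iff_ne_zero, Matrix.det_fin_two]
  rfl

/-- Three points of the plane are non-collinear iff the signed powers of the
difference vectors are linearly independent. -/
theorem noncollinear_iff_signedPow_linearIndependent {q : ℝ} (hq1 : 1 < q) (hq2 : q ≠ 2)
    (p₁ p₂ p₃ : Fin 2 → ℝ) :
    LinearIndependent ℝ ![p₁ - p₂, p₁ - p₃] ↔
      LinearIndependent ℝ ![signedPow (q - 1) (p₁ - p₂), signedPow (q - 1) (p₁ - p₃)] := by
  have hk : 0 < q - 1 := by linarith
  rw [li_iff, li_iff]
  have e : ∀ a : Fin 2 → ℝ, ∀ i, signedPow (q - 1) a i = gk (q - 1) (a i) := fun _ _ => rfl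
  simp only [e]
  rw [sub_ne_zero, sub_ne_zero, ← gk_mul, ← gk_mul, (gk_inj hk).ne_iff]
end

section
/- Let G=(V,E) be a simple connected graph, let (G,p) be a well-positioned bar-joint framework in (ℝ^d,‖·‖_P) for a polytopic norm ‖a‖_P=max_{1≤k≤s}|a·b_k|, and suppose the induced framework colouring uses only colours 1,…,m with m≤d and b_1,…,b_m linearly independent. If (G,p) is infinitesimally rigid then for each k∈{1,…,m} the monochrome subgraph G_k (edges of framework colour k) contains a spanning tree of G, i.e., G_k is connected and spans V. -/
open Filter Asymptotics

/-- Euclidean dot product on `ℝ^d`. -/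
def dotp {d : ℕ} (a b : Fin d → ℝ) : ℝ := ∑ i, a i * b i

/-- The polytopic norm `‖a‖_P = max_k |a · b_k|` determined by vectors `b₁,…,b_s`. -/
noncomputable def pNorm {d s : ℕ} (b : Fin s → Fin d → ℝ) (a : Fin d → ℝ) : ℝ :=
  sSup {x : ℝ | ∃ k, x = |dotp (b k) a|}

/-- An infinitesimal flex of `(G,p)` with respect to the polytopic norm given by `b`. -/
def IsFlexP {d s n : ℕ} (b : Fin s → Fin d → ℝ) (G : SimpleGraph (Fin n))
    (p u : Fin n → Fin d → ℝ) : Prop :=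
  ∀ i j, G.Adj i j →
    (fun t : ℝ => pNorm b ((p i + t • u i) - (p j + t • u j)) - pNorm b (p i - p j))
      =o[nhds (0 : ℝ)] (fun t : ℝ => t)

/-- The monochrome subgraph of colour `k` induced by an edge colouring `col`. -/
def monochrome {s n : ℕ} (G : SimpleGraph (Fin n)) (col : Fin n → Fin n → Fin s)
    (k : Fin s) : SimpleGraph (Fin n) :=
  SimpleGraph.fromRel (fun i j => G.Adj i j ∧ col i j = k)

lemma dotp_eq_inner {d : ℕ} (a c : Fin d → ℝ) :
    dotp a c = (inner ℝ ((WithLp.equiv 2 (Fin d → ℝ)).symm a)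
      ((WithLp.equiv 2 (Fin d → ℝ)).symm c) : ℝ) := by
  simp [dotp, PiLp.inner_apply, RCLike.inner_apply, conj_trivial, WithLp.equiv_symm_apply, mul_comm]

lemma dotp_add {d : ℕ} (a x y : Fin d → ℝ) : dotp a (x + y) = dotp a x + dotp a y := by
  simp [dotp, mul_add, Finset.sum_add_distrib]

lemma dotp_sub {d : ℕ} (a x y : Fin d → ℝ) : dotp a (x - y) = dotp a x - dotp a y := by
  simp [dotp, mul_sub, Finset.sum_sub_distrib]

lemma dotp_zero {d : ℕ} (a : Fin d → ℝ) : dotp a 0 = 0 := by simp [dotp]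

lemma dotp_smul {d : ℕ} (a : Fin d → ℝ) (t : ℝ) (x : Fin d → ℝ) :
    dotp a (t • x) = t * dotp a x := by
  simp only [dotp, Pi.smul_apply, smul_eq_mul, Finset.mul_sum]
  exact Finset.sum_congr rfl fun i _ => by ring

lemma pNorm_le {d s : ℕ} (b : Fin s → Fin d → ℝ) (a : Fin d → ℝ) (k : Fin s) :
    |dotp (b k) a| ≤ pNorm b a := by
  apply le_csSup
  · have : {x : ℝ | ∃ k, x = |dotp (b k) a|} = Set.range (fun k => |dotp (b k) a|) := by
      ext x; simp [eq_comm, Set.range]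
    rw [this]
    exact (Set.finite_range _).bddAbove
  · exact ⟨k, rfl⟩

lemma exists_dual_vec {d m : ℕ} (v : Fin m → EuclideanSpace ℝ (Fin d))
    (hind : LinearIndependent ℝ v) (k : Fin m) :
    ∃ z : EuclideanSpace ℝ (Fin d), (inner ℝ (v k) z : ℝ) ≠ 0 ∧
      ∀ l, l ≠ k → (inner ℝ (v l) z : ℝ) = 0 := by
  set W : Submodule ℝ (EuclideanSpace ℝ (Fin d)) := Submodule.span ℝ (v '' {l | l ≠ k}) with hW
  have hvk : v k ∉ W := hind.notMem_span_image (by simp)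
  set z := v k - (W.orthogonalProjectionOnto (v k) : EuclideanSpace ℝ (Fin d)) with hz
  have hzo : z ∈ Wᗮ := Submodule.sub_starProjection_mem_orthogonal (v k)
  have hzo' := (Submodule.mem_orthogonal W z).1 hzo
  refine ⟨z, ?_, fun l hl => hzo' (v l) (Submodule.subset_span ⟨l, hl, rfl⟩)⟩
  have hzne : z ≠ 0 := by
    intro h
    apply hvk
    rw [hz, sub_eq_zero] at h
    rw [h]; exact (W.orthogonalProjectionOnto (v k)).2
  have : (inner ℝ (v k) z : ℝ) = (inner ℝ z z : ℝ) +
      (inner ℝ ((W.orthogonalProjectionOnto (v k)) : EuclideanSpace ℝ (Fin d)) z : ℝ) := by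
    rw [← inner_add_left]; congr 1; rw [hz]; abel
  rw [this, hzo' _ (W.orthogonalProjectionOnto (v k)).2, add_zero]
  exact fun h => hzne (inner_self_eq_zero.1 h)

lemma pNorm_locally_const {d s : ℕ} [Nonempty (Fin s)] (b : Fin s → Fin d → ℝ)
    (a w : Fin d → ℝ) (c : Fin s) (hc : dotp (b c) w = 0)
    (heq : pNorm b a = |dotp (b c) a|)
    (hlt : ∀ k, k ≠ c → |dotp (b k) a| < pNorm b a) :
    ∀ᶠ t in nhds (0:ℝ), pNorm b (a + t • w) = pNorm b a := by
  have h1 : ∀ᶠ t in nhds (0:ℝ), ∀ k, |dotp (b k) (a + t • w)| ≤ pNorm b a := by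
    rw [eventually_all]
    intro k
    by_cases hk : k = c
    · subst hk
      filter_upwards with t
      rw [dotp_add, dotp_smul, hc, mul_zero, add_zero, ← heq]
    · have hcont : Continuous fun t : ℝ => |dotp (b k) a + t * dotp (b k) w| := by continuity
      have h0 : |dotp (b k) a + (0:ℝ) * dotp (b k) w| < pNorm b a := by
        simpa using hlt k hk
      filter_upwards [(hcont.tendsto 0).eventually_lt_const h0] with t ht
      rw [dotp_add, dotp_smul]
      exact le_of_lt ht
  filter_upwards [h1] with t ht
  apply le_antisymm
  · refine csSup_le ⟨|dotp (b (Classical.arbitrary (Fin s))) (a + t • w)|, ⟨_, rfl⟩⟩ ?_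
    rintro x ⟨k', rfl⟩
    exact ht k'
  · calc pNorm b a = |dotp (b c) a| := heq
      _ = |dotp (b c) (a + t • w)| := by rw [dotp_add, dotp_smul, hc, mul_zero, add_zero]
      _ ≤ pNorm b (a + t • w) := pNorm_le b (a + t • w) c

/-- If a well-positioned framework whose framework colouring uses only the colours
`1,…,m` (with `m ≤ d` and `b₁,…,b_m` linearly independent) is infinitesimally rigid,
then each monochrome subgraph contains a spanning tree, i.e. is a connected spanning
subgraph. -/
theorem rigid_implies_monochrome_spanning {d s n m : ℕ}
    (b : Fin s → Fin d → ℝ) (G : SimpleGraph (Fin n)) (hG : G.Connected)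
    (p : Fin n → Fin d → ℝ) (col : Fin n → Fin n → Fin s)
    (hwp : ∀ i j, G.Adj i j →
      ∀ k, pNorm b (p i - p j) = |dotp (b k) (p i - p j)| ↔ k = col i j)
    (hm : m ≤ d) (hms : m ≤ s)
    (hind : LinearIndependent ℝ (fun k : Fin m => b (Fin.castLE hms k)))
    (hcolm : ∀ i j, G.Adj i j → (col i j : ℕ) < m)
    (hrig : ∀ u, IsFlexP b G p u → ∃ a, ∀ i, u i = a) :
    ∀ k : Fin s, (k : ℕ) < m → (monochrome G col k).Connected := by
  classical
  intro k hk
  haveI : Nonempty (Fin n) := hG.nonempty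
  refine ⟨?_⟩
  by_contra hpre
  rw [SimpleGraph.Preconnected] at hpre
  push_neg at hpre
  obtain ⟨i0, j0, hreach⟩ := hpre
  set S : Set (Fin n) := {i | (monochrome G col k).Reachable i0 i} with hS
  -- the dual vector
  set v : Fin m → EuclideanSpace ℝ (Fin d) :=
    fun l => (WithLp.equiv 2 (Fin d → ℝ)).symm (b (Fin.castLE hms l)) with hv
  have hindv : LinearIndependent ℝ v := by
    have := hind.map' (WithLp.linearEquiv 2 ℝ (Fin d → ℝ)).symm.toLinearMap
      (LinearEquiv.ker _)
    exact this
  set k0 : Fin m := ⟨(k : ℕ), hk⟩ with hk0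
  have hbk : b (Fin.castLE hms k0) = b k := rfl
  obtain ⟨z, hz1, hz2⟩ := exists_dual_vec v hindv k0
  set z' : Fin d → ℝ := (WithLp.equiv 2 (Fin d → ℝ)) z with hz'
  have hzz : (WithLp.equiv 2 (Fin d → ℝ)).symm z' = z := by simp [hz']
  have hdz : ∀ c : Fin s, (c:ℕ) < m → c ≠ k → dotp (b c) z' = 0 := by
    intro c hcm hck
    have : dotp (b c) z' = (inner ℝ (v ⟨(c:ℕ), hcm⟩) z : ℝ) := by
      rw [dotp_eq_inner, hzz, hv]
      congr 2
    rw [this]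
    apply hz2
    intro h
    exact hck (Fin.ext (congrArg (Fin.val : Fin m → ℕ) h))
  have hvk0 : v k0 = (WithLp.equiv 2 (Fin d → ℝ)).symm (b k) := by
    simp only [hv]; rw [hbk]
  have hdzk : dotp (b k) z' ≠ 0 := by
    have : dotp (b k) z' = (inner ℝ (v k0) z : ℝ) := by
      rw [dotp_eq_inner, hzz, ← hvk0]
    rw [this]; exact hz1
  -- the flex
  set u : Fin n → Fin d → ℝ := fun i => if i ∈ S then z' else 0 with hu
  have hflex : IsFlexP b G p u := by
    intro i j hadj
    haveI : Nonempty (Fin s) := ⟨col i j⟩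
    have hptw : ∀ t : ℝ, (p i + t • u i) - (p j + t • u j) = (p i - p j) + t • (u i - u j) := by
      intro t; rw [smul_sub]; try abel
    by_cases hij : u i = u j
    · have hfun : (fun t : ℝ => pNorm b ((p i + t • u i) - (p j + t • u j))
          - pNorm b (p i - p j)) = fun _ => (0:ℝ) := by
        funext t
        rw [hptw, hij]
        try simp
      rw [hfun]
      exact isLittleO_zero _ _
    · -- mixed case
      have hck : col i j ≠ k := by
        intro h
        apply hij
        have hmadj : (monochrome G col k).Adj i j := by
          rw [monochrome, SimpleGraph.fromRel_adj]
          exact ⟨hadj.ne, Or.inl ⟨hadj, h⟩⟩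
        have hiff : i ∈ S ↔ j ∈ S :=
          ⟨fun h' => h'.trans hmadj.reachable, fun h' => h'.trans hmadj.symm.reachable⟩
        simp only [hu]
        by_cases hi : i ∈ S
        · rw [if_pos hi, if_pos (hiff.1 hi)]
        · rw [if_neg hi, if_neg (fun hj => hi (hiff.2 hj))]
      have hcw : dotp (b (col i j)) (u i - u j) = 0 := by
        have hz0 : dotp (b (col i j)) z' = 0 := hdz _ (hcolm i j hadj) hck
        rw [dotp_sub]
        simp only [hu]
        by_cases hi : i ∈ S <;> by_cases hj : j ∈ S <;>
          simp [hi, hj, hz0, dotp_zero]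
      have heq : pNorm b (p i - p j) = |dotp (b (col i j)) (p i - p j)| :=
        (hwp i j hadj (col i j)).2 rfl
      have hlt : ∀ k', k' ≠ col i j → |dotp (b k') (p i - p j)| < pNorm b (p i - p j) := by
        intro k' hk'
        refine lt_of_le_of_ne (pNorm_le b _ k') ?_
        intro h
        exact hk' ((hwp i j hadj k').1 h.symm)
      have hev := pNorm_locally_const b (p i - p j) (u i - u j) (col i j) hcw heq hlt
      have hev0 : (fun t : ℝ => pNorm b ((p i + t • u i) - (p j + t • u j))
          - pNorm b (p i - p j)) =ᶠ[nhds (0:ℝ)] (fun _ => (0:ℝ)) := by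
        filter_upwards [hev] with t ht
        rw [hptw, ht, sub_self]
      exact hev0.trans_isLittleO (isLittleO_zero _ _)
  obtain ⟨a, ha⟩ := hrig u hflex
  have hi0 : u i0 = z' := by simp only [hu]; rw [if_pos (show i0 ∈ S from SimpleGraph.Reachable.refl i0)]
  have hj0 : u j0 = 0 := by simp only [hu]; rw [if_neg (show j0 ∉ S from hreach)]
  have : z' = (0 : Fin d → ℝ) := by rw [← hi0, ha i0, ← ha j0, hj0]
  exact hdzk (by rw [this, dotp_zero])
end

section
/- Let b_1=(1,0), b_2=(0,1) and the norm ‖a‖_P=max(|a_1|,|a_2|) (the ℓ^∞ norm) on ℝ^2. For sufficiently small ε>0, the placement of K_4 at p_1=(0,0), p_2=(1,0), p_3=(1,1−ε), p_4=(0,1+ε) is well-positioned, with edges p_1p_2, p_1p_3, p_3p_4 of framework colour 1 and edges p_1p_4, p_2p_3, p_2p_4 of framework colour 2; consequently both monochrome subgraphs are spanning trees of K_4 and this realisation of K_4 is infinitesimally rigid. -/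
open Filter
open Asymptotics

/-- The intended edge colouring of `K₄`: edges `01, 02, 23` get colour `0` and
edges `03, 12, 13` get colour `1`. -/
def colK4 : Fin 4 → Fin 4 → Fin 2 := fun i j =>
  if ({i, j} : Finset (Fin 4)) ∈ ({{0, 1}, {0, 2}, {2, 3}} : Finset (Finset (Fin 4)))
  then 0 else 1

/- ### Auxiliary lemmas -/

lemma isLittleO_mul_id {d : ℝ} (h : (fun t : ℝ => t * d) =o[nhds (0:ℝ)] (fun t => t)) : d = 0 := by
  by_contra hd
  have hpos : 0 < |d| / 2 := by positivity
  have h2 := h.def hpos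
  have h3 : ∀ᶠ t in nhdsWithin (0:ℝ) {(0:ℝ)}ᶜ, ‖t * d‖ ≤ |d|/2 * ‖t‖ :=
    h2.filter_mono nhdsWithin_le_nhds
  obtain ⟨t, ht, htne⟩ := (h3.and eventually_mem_nhdsWithin).exists
  have h4 : |t| * |d| ≤ |d|/2 * |t| := by simpa [abs_mul, Real.norm_eq_abs] using ht
  have htp : 0 < |t| := abs_pos.mpr htne
  nlinarith [abs_pos.mpr hd]

lemma flex_coord {c c' d d' : ℝ} (hcc : |c'| < |c|)
    (h : (fun t : ℝ => max |c + t * d| |c' + t * d'| - max |c| |c'|) =o[nhds (0:ℝ)]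
      (fun t => t)) : d = 0 := by
  have hc0 : c ≠ 0 := by
    intro h0
    rw [h0, abs_zero] at hcc
    exact absurd hcc (not_lt.2 (abs_nonneg c'))
  set s : ℝ := if 0 < c then 1 else -1 with hs
  set r : ℝ := (|c| - |c'|) / (|d| + |d'| + 1) with hr
  have hrpos : 0 < r := div_pos (sub_pos.2 hcc) (by positivity)
  have hev : (fun t : ℝ => max |c + t * d| |c' + t * d'| - max |c| |c'|)
      =ᶠ[nhds (0:ℝ)] (fun t => t * (s * d)) := by
    have hball : ∀ᶠ t in nhds (0:ℝ), |t| < r := by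
      filter_upwards [Metric.ball_mem_nhds (0:ℝ) hrpos] with t ht
      simpa [Real.dist_eq] using ht
    filter_upwards [hball] with t ht
    have htd : |t * d| ≤ |t| * |d| := le_of_eq (abs_mul t d)
    have htd' : |t * d'| ≤ |t| * |d'| := le_of_eq (abs_mul t d')
    have h1 : |t| * (|d| + |d'|) < |c| - |c'| := by
      have h1a : |t| * (|d| + |d'| + 1) < r * (|d| + |d'| + 1) := by
        apply mul_lt_mul_of_pos_right ht (by positivity)
      rw [hr, div_mul_cancel₀ _ (by positivity : (|d| + |d'| + 1) ≠ 0)] at h1a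
      nlinarith [abs_nonneg t]
    have h2 : |c' + t * d'| ≤ |c'| + |t| * |d'| :=
      le_trans (abs_add_le _ _) (by linarith)
    have h3 : |c| - |t| * |d| ≤ |c + t * d| := by
      have : |c| ≤ |c + t * d| + |t * d| := by
        calc |c| = |(c + t * d) + (-(t * d))| := by ring_nf
        _ ≤ |c + t * d| + |(-(t * d))| := abs_add_le _ _
        _ = |c + t * d| + |t * d| := by rw [abs_neg]
      linarith
    have h4 : |c' + t * d'| < |c + t * d| := by nlinarith [abs_nonneg t, abs_nonneg d']
    have hmax : max |c + t * d| |c' + t * d'| = |c + t * d| := max_eq_left h4.le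
    have hmax2 : max |c| |c'| = |c| := max_eq_left hcc.le
    rcases lt_or_gt_of_ne hc0 with hneg | hpos
    · have hcabs : |c| = -c := abs_of_neg hneg
      have hsval : s = -1 := by rw [hs, if_neg (not_lt.2 hneg.le)]
      have hlt : c + t * d < 0 := by
        have e0 : c + t * d ≤ c + |t| * |d| := by nlinarith [le_abs_self (t * d)]
        have e1 : (0:ℝ) ≤ |t| * |d'| := by positivity
        have e2 : (0:ℝ) ≤ |c'| := abs_nonneg c'
        linarith
      rw [hmax, hmax2, abs_of_neg hlt, hcabs, hsval]
      ring
    · have hcabs : |c| = c := abs_of_pos hpos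
      have hsval : s = 1 := by rw [hs, if_pos hpos]
      have hgt : 0 < c + t * d := by
        have e0 : c - |t| * |d| ≤ c + t * d := by nlinarith [neg_abs_le (t * d)]
        have e1 : (0:ℝ) ≤ |t| * |d'| := by positivity
        have e2 : (0:ℝ) ≤ |c'| := abs_nonneg c'
        linarith
      rw [hmax, hmax2, abs_of_pos hgt, hcabs, hsval]
      ring
  have h5 : (fun t : ℝ => t * (s * d)) =o[nhds (0:ℝ)] (fun t : ℝ => t) :=
    h.congr' hev EventuallyEq.rfl
  have h6 := isLittleO_mul_id h5
  have hs0 : s ≠ 0 := by rw [hs]; split <;> norm_num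
  exact (mul_eq_zero.mp h6).resolve_left hs0

lemma pNorm_eq (a : Fin 2 → ℝ) : pNorm ![![1,0],![0,1]] a = max |a 0| |a 1| := by
  unfold pNorm
  have hset : {x : ℝ | ∃ k, x = |dotp (![![1,0],![0,1]] k) a|} = {|a 0|, |a 1|} := by
    ext x
    simp only [Set.mem_setOf_eq, Set.mem_insert_iff, Set.mem_singleton_iff]
    constructor
    · rintro ⟨k, rfl⟩
      fin_cases k
      · left; simp [dotp, Fin.sum_univ_two]
      · right; simp [dotp, Fin.sum_univ_two]
    · rintro (rfl | rfl)
      · exact ⟨0, by simp [dotp, Fin.sum_univ_two]⟩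
      · exact ⟨1, by simp [dotp, Fin.sum_univ_two]⟩
  rw [hset, csSup_pair]

lemma comp_eq (p u : Fin 4 → Fin 2 → ℝ) (i j : Fin 4) (t : ℝ) (m : Fin 2) :
    ((p i + t • u i) - (p j + t • u j)) m = (p i m - p j m) + t * (u i m - u j m) := by
  simp only [Pi.add_apply, Pi.sub_apply, Pi.smul_apply, smul_eq_mul]
  ring

lemma flex_apply0 {p u : Fin 4 → Fin 2 → ℝ} {i j : Fin 4}
    (h : (fun t : ℝ => pNorm ![![1,0],![0,1]] ((p i + t • u i) - (p j + t • u j))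
        - pNorm ![![1,0],![0,1]] (p i - p j)) =o[nhds (0:ℝ)] (fun t => t))
    (hdom : |p i 1 - p j 1| < |p i 0 - p j 0|) : u i 0 = u j 0 := by
  have key : (fun t : ℝ => max |(p i 0 - p j 0) + t * (u i 0 - u j 0)|
      |(p i 1 - p j 1) + t * (u i 1 - u j 1)| - max |p i 0 - p j 0| |p i 1 - p j 1|)
      =o[nhds (0:ℝ)] (fun t : ℝ => t) := by
    refine h.congr (fun t => ?_) (fun _ => rfl)
    rw [pNorm_eq, pNorm_eq, comp_eq, comp_eq, Pi.sub_apply, Pi.sub_apply]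
  exact sub_eq_zero.mp (flex_coord hdom key)

lemma flex_apply1 {p u : Fin 4 → Fin 2 → ℝ} {i j : Fin 4}
    (h : (fun t : ℝ => pNorm ![![1,0],![0,1]] ((p i + t • u i) - (p j + t • u j))
        - pNorm ![![1,0],![0,1]] (p i - p j)) =o[nhds (0:ℝ)] (fun t => t))
    (hdom : |p i 0 - p j 0| < |p i 1 - p j 1|) : u i 1 = u j 1 := by
  have key : (fun t : ℝ => max |(p i 1 - p j 1) + t * (u i 1 - u j 1)|
      |(p i 0 - p j 0) + t * (u i 0 - u j 0)| - max |p i 1 - p j 1| |p i 0 - p j 0|)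
      =o[nhds (0:ℝ)] (fun t : ℝ => t) := by
    refine h.congr (fun t => ?_) (fun _ => rfl)
    rw [pNorm_eq, pNorm_eq, comp_eq, comp_eq, Pi.sub_apply, Pi.sub_apply,
      max_comm |(p i 0 - p j 0) + t * (u i 0 - u j 0)|, max_comm |p i 0 - p j 0|]
  exact sub_eq_zero.mp (flex_coord hdom key)


lemma wp0 {v : Fin 2 → ℝ} (h : |v 1| < |v 0|) (k : Fin 2) :
    (max |v 0| |v 1| = |dotp (![![1,0],![0,1]] k) v| ↔ k = 0) := by
  fin_cases k
  · simp [dotp, Fin.sum_univ_two, max_eq_left h.le]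
  · simp [dotp, Fin.sum_univ_two, max_eq_left h.le]
    exact h.ne'

lemma wp1 {v : Fin 2 → ℝ} (h : |v 0| < |v 1|) (k : Fin 2) :
    (max |v 0| |v 1| = |dotp (![![1,0],![0,1]] k) v| ↔ k = 1) := by
  fin_cases k
  · simp [dotp, Fin.sum_univ_two, max_eq_right h.le]
    exact h.ne'
  · simp [dotp, Fin.sum_univ_two, max_eq_right h.le]

instance mono_dec (k : Fin 2) : DecidableRel (monochrome (⊤ : SimpleGraph (Fin 4)) colK4 k).Adj :=
  fun a b => decidable_of_iff _ (SimpleGraph.fromRel_adj _ a b).symm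

instance mono_dec' (k : Fin 2) (e : Sym2 (Fin 4)) :
    DecidableRel (monochrome (⊤ : SimpleGraph (Fin 4)) colK4 k \ SimpleGraph.fromEdgeSet {e}).Adj :=
  fun a b => decidable_of_iff
    ((monochrome (⊤ : SimpleGraph (Fin 4)) colK4 k).Adj a b ∧ ¬(s(a,b) = e ∧ a ≠ b))
    (by simp only [SimpleGraph.sdiff_adj, SimpleGraph.fromEdgeSet_adj, Set.mem_singleton_iff])

lemma monochrome_isTree : ∀ k : Fin 2, (monochrome (⊤ : SimpleGraph (Fin 4)) colK4 k).IsTree := by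
  have h1 : ∀ k : Fin 2, (monochrome (⊤ : SimpleGraph (Fin 4)) colK4 k).Preconnected := by decide
  have h2 : ∀ k : Fin 2, ∀ v w : Fin 4, (monochrome (⊤ : SimpleGraph (Fin 4)) colK4 k).Adj v w →
      ¬(monochrome (⊤ : SimpleGraph (Fin 4)) colK4 k \ SimpleGraph.fromEdgeSet {s(v, w)}).Reachable v w := by
    decide
  intro k
  exact ⟨⟨h1 k⟩, (SimpleGraph.isAcyclic_iff_forall_adj_isBridge).2
    (fun v w h => (SimpleGraph.isBridge_iff).2 (h2 k v w h))⟩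

/-- For small `ε > 0`, the placement of `K₄` at `(0,0), (1,0), (1,1-ε), (0,1+ε)` in
`(ℝ², ‖·‖_∞)` is well-positioned with framework colouring `colK4`, both monochrome
subgraphs are spanning trees, and the framework is infinitesimally rigid. -/
theorem K4_realisation_rigid :
    ∃ ε₀ > (0 : ℝ), ∀ ε : ℝ, 0 < ε → ε < ε₀ →
      ∀ b : Fin 2 → Fin 2 → ℝ, b = ![![1, 0], ![0, 1]] →
      ∀ p : Fin 4 → Fin 2 → ℝ, p = ![![0, 0], ![1, 0], ![1, 1 - ε], ![0, 1 + ε]] →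
        (∀ i j : Fin 4, (⊤ : SimpleGraph (Fin 4)).Adj i j →
          ∀ k : Fin 2, pNorm b (p i - p j) = |dotp (b k) (p i - p j)| ↔ k = colK4 i j) ∧
        (∀ k : Fin 2, (monochrome (⊤ : SimpleGraph (Fin 4)) colK4 k).IsTree) ∧
        (∀ u, IsFlexP b (⊤ : SimpleGraph (Fin 4)) p u → ∃ a, ∀ i, u i = a) := by
  refine ⟨1/2, by norm_num, ?_⟩
  intro ε hε hε2 b hb p hp
  subst hb; subst hp
  refine ⟨?_, monochrome_isTree, ?_⟩
  · intro i j hij k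
    fin_cases i <;> fin_cases j
    · exact (hij.ne rfl).elim
    · rw [pNorm_eq]
      refine (wp0 ?_ k).trans (by fin_cases k <;> decide)
      rw [← sq_lt_sq]
      simp
      try first
        | (rw [abs_lt]; constructor <;> linarith)
        | (rw [lt_abs]; first | (left; linarith) | (right; linarith))
        | positivity
        | nlinarith
    · rw [pNorm_eq]
      refine (wp0 ?_ k).trans (by fin_cases k <;> decide)
      rw [← sq_lt_sq]
      simp
      try first
        | (rw [abs_lt]; constructor <;> linarith)
        | (rw [lt_abs]; first | (left; linarith) | (right; linarith))
        | positivity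
        | nlinarith
    · rw [pNorm_eq]
      refine (wp1 ?_ k).trans (by fin_cases k <;> decide)
      rw [← sq_lt_sq]
      simp
      try first
        | (rw [abs_lt]; constructor <;> linarith)
        | (rw [lt_abs]; first | (left; linarith) | (right; linarith))
        | positivity
        | nlinarith
    · rw [pNorm_eq]
      refine (wp0 ?_ k).trans (by fin_cases k <;> decide)
      rw [← sq_lt_sq]
      simp
      try first
        | (rw [abs_lt]; constructor <;> linarith)
        | (rw [lt_abs]; first | (left; linarith) | (right; linarith))
        | positivity
        | nlinarith
    · exact (hij.ne rfl).elim
    · rw [pNorm_eq]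
      refine (wp1 ?_ k).trans (by fin_cases k <;> decide)
      rw [← sq_lt_sq]
      simp
      try first
        | (rw [abs_lt]; constructor <;> linarith)
        | (rw [lt_abs]; first | (left; linarith) | (right; linarith))
        | positivity
        | nlinarith
    · rw [pNorm_eq]
      refine (wp1 ?_ k).trans (by fin_cases k <;> decide)
      rw [← sq_lt_sq]
      simp
      try first
        | (rw [abs_lt]; constructor <;> linarith)
        | (rw [lt_abs]; first | (left; linarith) | (right; linarith))
        | positivity
        | nlinarith
    · rw [pNorm_eq]
      refine (wp0 ?_ k).trans (by fin_cases k <;> decide)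
      rw [← sq_lt_sq]
      simp
      try first
        | (rw [abs_lt]; constructor <;> linarith)
        | (rw [lt_abs]; first | (left; linarith) | (right; linarith))
        | positivity
        | nlinarith
    · rw [pNorm_eq]
      refine (wp1 ?_ k).trans (by fin_cases k <;> decide)
      rw [← sq_lt_sq]
      simp
      try first
        | (rw [abs_lt]; constructor <;> linarith)
        | (rw [lt_abs]; first | (left; linarith) | (right; linarith))
        | positivity
        | nlinarith
    · exact (hij.ne rfl).elim
    · rw [pNorm_eq]
      refine (wp0 ?_ k).trans (by fin_cases k <;> decide)
      rw [← sq_lt_sq]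
      simp
      try first
        | (rw [abs_lt]; constructor <;> linarith)
        | (rw [lt_abs]; first | (left; linarith) | (right; linarith))
        | positivity
        | nlinarith
    · rw [pNorm_eq]
      refine (wp1 ?_ k).trans (by fin_cases k <;> decide)
      rw [← sq_lt_sq]
      simp
      try first
        | (rw [abs_lt]; constructor <;> linarith)
        | (rw [lt_abs]; first | (left; linarith) | (right; linarith))
        | positivity
        | nlinarith
    · rw [pNorm_eq]
      refine (wp1 ?_ k).trans (by fin_cases k <;> decide)
      rw [← sq_lt_sq]
      simp
      try first
        | (rw [abs_lt]; constructor <;> linarith)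
        | (rw [lt_abs]; first | (left; linarith) | (right; linarith))
        | positivity
        | nlinarith
    · rw [pNorm_eq]
      refine (wp0 ?_ k).trans (by fin_cases k <;> decide)
      rw [← sq_lt_sq]
      simp
      try first
        | (rw [abs_lt]; constructor <;> linarith)
        | (rw [lt_abs]; first | (left; linarith) | (right; linarith))
        | positivity
        | nlinarith
    · exact (hij.ne rfl).elim
  · intro u hu
    have h01 := flex_apply0 (hu 0 1 (by decide)) (by
      simp only [Matrix.cons_val_zero, Matrix.cons_val_one, Matrix.cons_val_two, Matrix.cons_val_three, Matrix.head_cons, Matrix.tail_cons]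
      norm_num)
    have h02 := flex_apply0 (hu 0 2 (by decide)) (by
      simp only [Matrix.cons_val_zero, Matrix.cons_val_one, Matrix.cons_val_two, Matrix.cons_val_three, Matrix.head_cons, Matrix.tail_cons]
      rw [abs_of_nonpos (by linarith), abs_of_nonpos (by norm_num)]
      linarith)
    have h23 := flex_apply0 (hu 2 3 (by decide)) (by
      simp only [Matrix.cons_val_zero, Matrix.cons_val_one, Matrix.cons_val_two, Matrix.cons_val_three, Matrix.head_cons, Matrix.tail_cons]
      rw [show (1:ℝ) - ε - (1 + ε) = -(2*ε) by ring, abs_neg,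
        abs_of_nonneg (by linarith : (0:ℝ) ≤ 2*ε), abs_of_nonneg (by norm_num : (0:ℝ) ≤ (1:ℝ) - 0)]
      linarith)
    have h03 := flex_apply1 (hu 0 3 (by decide)) (by
      simp only [Matrix.cons_val_zero, Matrix.cons_val_one, Matrix.cons_val_two, Matrix.cons_val_three, Matrix.head_cons, Matrix.tail_cons]
      rw [abs_of_nonpos (by linarith : (0:ℝ) - (1 + ε) ≤ 0)]
      simp
      linarith)
    have h12 := flex_apply1 (hu 1 2 (by decide)) (by
      simp only [Matrix.cons_val_zero, Matrix.cons_val_one, Matrix.cons_val_two, Matrix.cons_val_three, Matrix.head_cons, Matrix.tail_cons]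
      rw [abs_of_nonpos (by linarith : (0:ℝ) - (1 - ε) ≤ 0)]
      simp
      linarith)
    have h13 := flex_apply1 (hu 1 3 (by decide)) (by
      simp only [Matrix.cons_val_zero, Matrix.cons_val_one, Matrix.cons_val_two, Matrix.cons_val_three, Matrix.head_cons, Matrix.tail_cons]
      rw [abs_of_nonpos (by linarith : (0:ℝ) - (1 + ε) ≤ 0),
        abs_of_nonneg (by norm_num : (0:ℝ) ≤ (1:ℝ) - 0)]
      linarith)
    refine ⟨u 0, fun i => ?_⟩
    funext m
    fin_cases i <;> fin_cases m <;> simp_all <;> linarith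
end

section
/- Let (G,p) be a minimally infinitesimally rigid framework in (ℝ^2,‖·‖_q), 1<q<∞, q≠2 (with p_i≠p_j on edges). Then G is (2,2)-tight: |E|=2|V|−2 and |E(H)|≤2|V(H)|−2 for all subgraphs H. -/
open Filter Asymptotics

/-- The `q`-norm on `ℝ^d`. -/
noncomputable def qNorm (q : ℝ) {d : ℕ} (a : Fin d → ℝ) : ℝ :=
  (∑ i, |a i| ^ q) ^ (1 / q)

/-- An infinitesimal flex of `(G,p)` with respect to the `q`-norm on `ℝ^d`. -/
def IsFlexQ (q : ℝ) {d n : ℕ} (G : SimpleGraph (Fin n)) (p u : Fin n → Fin d → ℝ) : Prop :=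
  ∀ i j, G.Adj i j →
    (fun t : ℝ => qNorm q ((p i + t • u i) - (p j + t • u j)) - qNorm q (p i - p j))
      =o[nhds (0 : ℝ)] (fun t : ℝ => t)

/-- Infinitesimal rigidity: every infinitesimal flex is a constant vector. -/
def IsInfRigidQ (q : ℝ) {d n : ℕ} (G : SimpleGraph (Fin n)) (p : Fin n → Fin d → ℝ) : Prop :=
  ∀ u, IsFlexQ q G p u → ∃ a, ∀ i, u i = a

noncomputable def qCoef (q x : ℝ) : ℝ := q * |x| ^ (q - 2) * x

lemma qCoef_neg (q x : ℝ) : qCoef q (-x) = - qCoef q x := by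
  simp [qCoef, mul_assoc]

lemma hasDerivAt_qNorm_line {q : ℝ} (hq : 1 < q) {d : ℕ} (v w : Fin d → ℝ) :
    HasDerivAt (fun t : ℝ => ∑ k, |v k + t * w k| ^ q) (∑ k, qCoef q (v k) * w k) 0 := by
  apply HasDerivAt.fun_sum
  intro k _
  have h1 : HasDerivAt (fun t : ℝ => v k + t * w k) (w k) 0 := by
    simpa using ((hasDerivAt_id (0:ℝ)).mul_const (w k)).const_add (v k)
  have h2 := (hasDerivAt_abs_rpow (v k + 0 * w k) hq).comp 0 h1
  simpa [qCoef, mul_assoc, mul_comm, mul_left_comm, Function.comp_def] using h2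

lemma sumS_pos {q : ℝ} (hq : 1 < q) {d : ℕ} (v : Fin d → ℝ) (hv : v ≠ 0) :
    0 < ∑ k, |v k| ^ q := by
  obtain ⟨k0, hk0⟩ : ∃ k, v k ≠ 0 := by
    by_contra h; push_neg at h; exact hv (funext h)
  apply Finset.sum_pos'
  · intro k _; exact Real.rpow_nonneg (abs_nonneg _) q
  · exact ⟨k0, Finset.mem_univ _, Real.rpow_pos_of_pos (abs_pos.mpr hk0) q⟩

lemma littleO_mul_iff (D : ℝ) :
    ((fun t : ℝ => D * t) =o[nhds 0] fun t : ℝ => t) ↔ D = 0 := by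
  constructor
  · intro h
    by_contra hD
    have h1 := (isLittleO_iff.mp h) (c := |D|/2) (by positivity)
    have h2 := h1.filter_mono (nhdsWithin_le_nhds (s := {(0:ℝ)}ᶜ))
    obtain ⟨t, ht1, ht2⟩ := (h2.and eventually_mem_nhdsWithin).exists
    simp only [Real.norm_eq_abs, abs_mul] at ht1
    have ht0 : t ≠ 0 := ht2
    have : |D| ≤ |D|/2 := by
      have htpos : 0 < |t| := abs_pos.mpr ht0
      nlinarith [ht1]
    have : |D| > 0 := abs_pos.mpr hD
    linarith
  · rintro rfl
    simpa using (isLittleO_refl (fun t : ℝ => t) (nhds 0)).const_mul_left 0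

lemma flex_iff_lin {q : ℝ} (hq : 1 < q) {d : ℕ} (v w : Fin d → ℝ) (hv : v ≠ 0) :
    ((fun t : ℝ => (∑ k, |(v + t • w) k| ^ q) ^ (1/q) - (∑ k, |v k| ^ q) ^ (1/q))
        =o[nhds 0] fun t : ℝ => t) ↔
      (∑ k, qCoef q (v k) * w k) = 0 := by
  set S0 : ℝ := ∑ k, |v k| ^ q with hS0def
  have hS0 : 0 < S0 := sumS_pos hq v hv
  set L : ℝ := ∑ k, qCoef q (v k) * w k with hLdef
  have hS : HasDerivAt (fun t : ℝ => ∑ k, |v k + t * w k| ^ q) L 0 :=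
    hasDerivAt_qNorm_line hq v w
  have hr : HasDerivAt (fun s : ℝ => s ^ (1/q)) (1/q * S0 ^ (1/q - 1)) S0 :=
    Real.hasDerivAt_rpow_const (Or.inl (ne_of_gt hS0))
  have hr' : HasDerivAt (fun s : ℝ => s ^ (1/q))
      (1/q * S0 ^ (1/q - 1)) ((fun t : ℝ => ∑ k, |v k + t * w k| ^ q) 0) := by
    convert hr using 2; simp [hS0def]
  have hg : HasDerivAt (fun t : ℝ => (∑ k, |v k + t * w k| ^ q) ^ (1/q))
      (1/q * S0 ^ (1/q - 1) * L) 0 := by have := hr'.comp 0 hS; exact this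
  set D : ℝ := 1/q * S0 ^ (1/q - 1) * L with hDdef
  have hfun : (fun t : ℝ => (∑ k, |(v + t • w) k| ^ q) ^ (1/q) - (∑ k, |v k| ^ q) ^ (1/q))
      = fun t : ℝ => (∑ k, |v k + t * w k| ^ q) ^ (1/q) - S0 ^ (1/q) := by
    funext t; simp [smul_eq_mul, hS0def]
  have hlo := hasDerivAt_iff_isLittleO.mp hg
  simp only [sub_zero, zero_mul, smul_eq_mul, mul_comm] at hlo
  -- hlo : (fun t => g t - g 0 - D * t) =o[𝓝 0] fun t => t
  have hg0 : (∑ x : Fin d, |v x + w x * 0| ^ q) = S0 := by simp [hS0def]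
  have hc : 0 < 1/q * S0 ^ (1/q - 1) := by positivity
  rw [hfun]
  constructor
  · intro h
    have h2 := h.sub hlo
    have h3 : (fun t : ℝ => D * t) =o[nhds 0] fun t : ℝ => t := by
      refine h2.congr_left fun t => ?_
      rw [hg0]
      ring
    have hD0 : D = 0 := (littleO_mul_iff D).mp h3
    rcases mul_eq_zero.mp hD0 with h | h
    · exact absurd h (ne_of_gt hc)
    · exact h
  · intro hL
    have hD0 : D = 0 := by rw [hDdef, hL, mul_zero]
    refine hlo.congr_left fun t => ?_
    rw [hg0, hD0]
    ring

noncomputable def rowL (q : ℝ) {n : ℕ} (p : Fin n → Fin 2 → ℝ) (i j : Fin n) :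
    (Fin n → Fin 2 → ℝ) →ₗ[ℝ] ℝ :=
  ∑ k : Fin 2, qCoef q (p i k - p j k) •
    (((LinearMap.proj k : (Fin 2 → ℝ) →ₗ[ℝ] ℝ).comp
        (LinearMap.proj i : (Fin n → Fin 2 → ℝ) →ₗ[ℝ] (Fin 2 → ℝ)))
      - ((LinearMap.proj k : (Fin 2 → ℝ) →ₗ[ℝ] ℝ).comp
        (LinearMap.proj j : (Fin n → Fin 2 → ℝ) →ₗ[ℝ] (Fin 2 → ℝ))))

lemma rowL_apply (q : ℝ) {n : ℕ} (p : Fin n → Fin 2 → ℝ) (i j : Fin n)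
    (u : Fin n → Fin 2 → ℝ) :
    rowL q p i j u = ∑ k, qCoef q (p i k - p j k) * (u i k - u j k) := by
  simp [rowL, smul_eq_mul]

lemma rowL_symm (q : ℝ) {n : ℕ} (p : Fin n → Fin 2 → ℝ) (i j : Fin n)
    (u : Fin n → Fin 2 → ℝ) :
    rowL q p j i u = rowL q p i j u := by
  rw [rowL_apply, rowL_apply]
  congr 1; funext k
  have h2 : p j k - p i k = -(p i k - p j k) := by ring
  rw [h2, qCoef_neg]; ring

lemma rowL_const (q : ℝ) {n : ℕ} (p : Fin n → Fin 2 → ℝ) (i j : Fin n)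
    (a : Fin 2 → ℝ) :
    rowL q p i j (fun _ => a) = 0 := by
  simp [rowL_apply]

/-- The key equivalence: the little-o flex condition for one edge is equivalent to
vanishing of the rigidity-matrix row. -/
lemma flex_edge_iff_rowL {q : ℝ} (hq : 1 < q) {n : ℕ} (p u : Fin n → Fin 2 → ℝ)
    (i j : Fin n) (hij : p i ≠ p j) :
    ((fun t : ℝ => qNorm q ((p i + t • u i) - (p j + t • u j)) - qNorm q (p i - p j))
        =o[nhds 0] fun t : ℝ => t) ↔ rowL q p i j u = 0 := by
  have hv : p i - p j ≠ 0 := sub_ne_zero.mpr hij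
  have hfun : ∀ t : ℝ, (p i + t • u i) - (p j + t • u j) = (p i - p j) + t • (u i - u j) := by
    intro t; funext k; simp [smul_eq_mul]; ring
  have h := flex_iff_lin hq (p i - p j) (u i - u j) hv
  rw [rowL_apply]
  constructor
  · intro hflex
    rw [← h.mp]
    · congr 1
    · refine hflex.congr_left fun t => ?_
      rw [hfun t]; rfl
  · intro hrow
    have hL : (∑ k, qCoef q ((p i - p j) k) * (u i - u j) k) = 0 := by
      rw [← hrow]; rfl
    have := h.mpr hL
    refine this.congr_left fun t => ?_
    rw [hfun t]; rfl

lemma surjective_of_singles {ι : Type*} [Fintype ι] [DecidableEq ι]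
    {W : Type*} [AddCommGroup W] [Module ℝ W]
    (Φ : W →ₗ[ℝ] (ι → ℝ)) (h : ∀ e : ι, ∃ u c, c ≠ 0 ∧ Φ u = Pi.single e c) :
    Function.Surjective Φ := by
  rw [← LinearMap.range_eq_top, ← top_le_iff, ← (Pi.basisFun ℝ ι).span_eq]
  apply Submodule.span_le.mpr
  rintro _ ⟨e, rfl⟩
  obtain ⟨u, c, hc, hu⟩ := h e
  have : (Pi.basisFun ℝ ι) e = Φ (c⁻¹ • u) := by
    rw [map_smul, hu]
    funext e'
    simp [Pi.single_apply, inv_mul_cancel₀ hc]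
  rw [this]
  exact LinearMap.mem_range_self Φ _

lemma card_count {ι μ : Type*} [Fintype ι] [Fintype μ]
    (Φ : (μ → Fin 2 → ℝ) →ₗ[ℝ] (ι → ℝ)) (hsurj : Function.Surjective Φ) :
    Fintype.card ι + Module.finrank ℝ (LinearMap.ker Φ) = 2 * Fintype.card μ := by
  have h1 := LinearMap.finrank_range_add_finrank_ker Φ
  rw [LinearMap.range_eq_top.mpr hsurj] at h1
  rw [finrank_top] at h1
  rw [Module.finrank_pi] at h1
  rw [Module.finrank_pi_fintype] at h1
  have h3 : ∀ i : μ, Module.finrank ℝ (Fin 2 → ℝ) = 2 := by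
    intro _; rw [Module.finrank_pi]; simp
  simp only [Module.finrank_pi, Fintype.card_fin, Finset.sum_const, smul_eq_mul,
    Finset.card_univ] at h1
  omega

noncomputable def constMap (μ : Type*) : (Fin 2 → ℝ) →ₗ[ℝ] (μ → Fin 2 → ℝ) :=
  LinearMap.pi fun _ => LinearMap.id

lemma constMap_apply {μ : Type*} (a : Fin 2 → ℝ) : constMap μ a = fun _ => a := rfl

lemma finrank_constMap_range {μ : Type*} [Fintype μ] [Nonempty μ] :
    Module.finrank ℝ (LinearMap.range (constMap μ)) = 2 := by
  rw [LinearMap.finrank_range_of_inj]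
  · rw [Module.finrank_pi]; simp
  · intro a b hab
    obtain ⟨i⟩ := ‹Nonempty μ›
    exact congrFun hab i

open scoped Classical in
noncomputable def restr {n : ℕ} (s : Set (Fin n)) :
    (↥s → Fin 2 → ℝ) →ₗ[ℝ] (Fin n → Fin 2 → ℝ) :=
  LinearMap.pi (fun i => if h : i ∈ s then LinearMap.proj ⟨i, h⟩ else 0)

lemma restr_apply_mem {n : ℕ} (s : Set (Fin n)) (w : ↥s → Fin 2 → ℝ) {a : Fin n}
    (ha : a ∈ s) : restr s w a = w ⟨a, ha⟩ := by
  simp only [restr, LinearMap.pi_apply]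
  rw [dif_pos ha]
  rfl

lemma rowL_restr_eq {q : ℝ} {n : ℕ} (p : Fin n → Fin 2 → ℝ) {s : Set (Fin n)}
    {a b : Fin n} (ha : a ∈ s) (hb : b ∈ s) (u : Fin n → Fin 2 → ℝ) :
    rowL q p a b (restr s (fun v => u ↑v)) = rowL q p a b u := by
  rw [rowL_apply, rowL_apply]
  congr 1; funext k
  rw [restr_apply_mem s _ ha, restr_apply_mem s _ hb]

/-- A minimally infinitesimally rigid framework in `(ℝ², ‖·‖_q)`, `1 < q < ∞`, `q ≠ 2`,
has a `(2,2)`-tight underlying graph. -/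
theorem min_rigid_implies_tight {q : ℝ} (hq1 : 1 < q) (hq2 : q ≠ 2)
    {n : ℕ} (G : SimpleGraph (Fin n)) (p : Fin n → Fin 2 → ℝ)
    (hp : ∀ i j, G.Adj i j → p i ≠ p j)
    (hrig : IsInfRigidQ q G p)
    (hmin : ∀ i j, G.Adj i j →
      ∃ u, IsFlexQ q (G.deleteEdges {s(i, j)}) p u ∧ ¬∃ a, ∀ i, u i = a) :
    G.edgeSet.ncard = 2 * n - 2 ∧
      ∀ H : G.Subgraph, H.edgeSet.ncard ≤ 2 * H.verts.ncard - 2 := by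
  classical
  have key : ∀ i j, G.Adj i j → ∃ u : Fin n → Fin 2 → ℝ,
      rowL q p i j u ≠ 0 ∧ ∀ a b, G.Adj a b → s(a,b) ≠ s(i,j) → rowL q p a b u = 0 := by
    intro i j hij
    obtain ⟨u, hflex, hnc⟩ := hmin i j hij
    have hzero : ∀ a b, G.Adj a b → s(a,b) ≠ s(i,j) → rowL q p a b u = 0 := by
      intro a b hab hne
      have hadj' : (G.deleteEdges {s(i,j)}).Adj a b := by
        rw [SimpleGraph.deleteEdges_adj]
        exact ⟨hab, by simpa using hne⟩
      exact (flex_edge_iff_rowL hq1 p u a b (hp a b hab)).mp (hflex a b hadj')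
    refine ⟨u, ?_, hzero⟩
    intro hrow0
    apply hnc
    apply hrig
    intro a b hab
    refine (flex_edge_iff_rowL hq1 p u a b (hp a b hab)).mpr ?_
    by_cases h : s(a,b) = s(i,j)
    · rcases Sym2.eq_iff.mp h with ⟨h1, h2⟩ | ⟨h1, h2⟩
      · rw [h1, h2]; exact hrow0
      · rw [h1, h2, rowL_symm]; exact hrow0
    · exact hzero a b hab h
  have hker : ∀ u : Fin n → Fin 2 → ℝ, (∀ a b, G.Adj a b → rowL q p a b u = 0) →
      ∃ a, ∀ i, u i = a := by
    intro u h
    apply hrig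
    intro a b hab
    exact (flex_edge_iff_rowL hq1 p u a b (hp a b hab)).mpr (h a b hab)
  constructor
  · -- |E| = 2n - 2
    rcases Nat.eq_zero_or_pos n with hn | hn
    · subst hn
      have he : G.edgeSet = ∅ := Set.eq_empty_of_isEmpty _
      simp [he]
    · haveI : Fintype ↥G.edgeSet := Set.Finite.fintype (Set.toFinite _)
      haveI : Nonempty (Fin n) := ⟨⟨0, hn⟩⟩
      have hor : ∀ e : Sym2 (Fin n), e ∈ G.edgeSet → ∃ ab : Fin n × Fin n,
          G.Adj ab.1 ab.2 ∧ e = s(ab.1, ab.2) := by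
        intro e
        induction e using Sym2.ind with
        | _ a b => exact fun he => ⟨(a, b), G.mem_edgeSet.mp he, rfl⟩
      choose ab hab1 hab2 using hor
      set Φ : (Fin n → Fin 2 → ℝ) →ₗ[ℝ] (↥G.edgeSet → ℝ) :=
        LinearMap.pi (fun e : ↥G.edgeSet =>
          rowL q p (ab e.val e.prop).1 (ab e.val e.prop).2) with hΦ
      have hsurj : Function.Surjective Φ := by
        apply surjective_of_singles
        intro e
        obtain ⟨u, hu1, hu2⟩ := key _ _ (hab1 e.val e.prop)
        refine ⟨u, _, hu1, ?_⟩
        funext e'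
        show rowL q p (ab e'.val e'.prop).1 (ab e'.val e'.prop).2 u = _
        rcases eq_or_ne e' e with rfl | hne
        · simp [Pi.single_apply]
        · rw [Pi.single_apply, if_neg hne]
          apply hu2 _ _ (hab1 e'.val e'.prop)
          rw [← hab2 e'.val e'.prop, ← hab2 e.val e.prop]
          exact fun hc => hne (Subtype.ext hc)
      have hkerC : LinearMap.ker Φ = LinearMap.range (constMap (Fin n)) := by
        apply le_antisymm
        · intro u hu
          have h0 : ∀ e : ↥G.edgeSet,
              rowL q p (ab e.val e.prop).1 (ab e.val e.prop).2 u = 0 := by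
            intro e
            exact congrFun (LinearMap.mem_ker.mp hu) e
          have hall : ∀ a b, G.Adj a b → rowL q p a b u = 0 := by
            intro a b hab
            have hmem : s(a,b) ∈ G.edgeSet := G.mem_edgeSet.mpr hab
            have h2 : s(a,b) = s((ab _ hmem).1, (ab _ hmem).2) := hab2 _ hmem
            have h3 : rowL q p (ab s(a,b) hmem).1 (ab s(a,b) hmem).2 u = 0 :=
              h0 ⟨s(a,b), hmem⟩
            rcases Sym2.eq_iff.mp h2 with ⟨h4, h5⟩ | ⟨h4, h5⟩
            · rw [← h4, ← h5] at h3; exact h3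
            · rw [← h4, ← h5] at h3
              rw [rowL_symm q p b a]; exact h3
          obtain ⟨a, ha⟩ := hker u hall
          exact ⟨a, by funext i; rw [constMap_apply]; exact (ha i).symm⟩
        · rintro _ ⟨a, rfl⟩
          rw [LinearMap.mem_ker]
          funext e
          show rowL q p _ _ (constMap (Fin n) a) = 0
          rw [constMap_apply]
          exact rowL_const q p _ _ a
      have hcount := card_count Φ hsurj
      rw [hkerC, finrank_constMap_range] at hcount
      rw [← Nat.card_coe_set_eq, Nat.card_eq_fintype_card]
      simp only [Fintype.card_fin] at hcount
      omega
  · -- subgraph bound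
    intro H
    rcases Set.eq_empty_or_nonempty H.verts with hV | hV
    · have he : H.edgeSet = ∅ := by
        ext e
        simp only [Set.mem_empty_iff_false, iff_false]
        intro hmem
        induction e using Sym2.ind with
        | _ a b =>
          have : a ∈ H.verts := H.edge_vert (SimpleGraph.Subgraph.mem_edgeSet.mp hmem)
          rw [hV] at this
          exact this
      simp [he, hV]
    · haveI : Fintype ↥H.edgeSet := Set.Finite.fintype (Set.toFinite _)
      haveI : Fintype ↥H.verts := Set.Finite.fintype (Set.toFinite _)
      haveI : Nonempty ↥H.verts := hV.to_subtype
      have hor : ∀ e : Sym2 (Fin n), e ∈ H.edgeSet → ∃ ab : Fin n × Fin n,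
          H.Adj ab.1 ab.2 ∧ e = s(ab.1, ab.2) := by
        intro e
        induction e using Sym2.ind with
        | _ a b => exact fun he => ⟨(a, b), SimpleGraph.Subgraph.mem_edgeSet.mp he, rfl⟩
      choose ab hab1 hab2 using hor
      set Φ : (↥H.verts → Fin 2 → ℝ) →ₗ[ℝ] (↥H.edgeSet → ℝ) :=
        LinearMap.pi (fun e : ↥H.edgeSet =>
          (rowL q p (ab e.val e.prop).1 (ab e.val e.prop).2).comp (restr H.verts)) with hΦ
      have hsurj : Function.Surjective Φ := by
        apply surjective_of_singles
        intro e
        obtain ⟨u, hu1, hu2⟩ := key _ _ (H.adj_sub (hab1 e.val e.prop))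
        refine ⟨fun v => u ↑v, _, hu1, ?_⟩
        funext e'
        have hmm : ∀ (e'' : ↥H.edgeSet),
            Φ (fun v => u ↑v) e'' = rowL q p (ab e''.val e''.prop).1 (ab e''.val e''.prop).2 u := by
          intro e''
          show rowL q p _ _ (restr H.verts (fun v => u ↑v)) = _
          exact rowL_restr_eq p (H.edge_vert (hab1 e''.val e''.prop))
            (H.edge_vert (hab1 e''.val e''.prop).symm) u
        rw [hmm e']
        rcases eq_or_ne e' e with rfl | hne
        · simp [Pi.single_apply]
        · rw [Pi.single_apply, if_neg hne]
          apply hu2 _ _ (H.adj_sub (hab1 e'.val e'.prop))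
          rw [← hab2 e'.val e'.prop, ← hab2 e.val e.prop]
          exact fun hc => hne (Subtype.ext hc)
      have hkerC : LinearMap.range (constMap ↥H.verts) ≤ LinearMap.ker Φ := by
        rintro _ ⟨a, rfl⟩
        rw [LinearMap.mem_ker]
        funext e
        show rowL q p _ _ (restr H.verts (constMap ↥H.verts a)) = 0
        have : restr H.verts (constMap ↥H.verts a)
            = restr H.verts (fun v => (fun _ : Fin n => a) ↑v) := rfl
        rw [this, rowL_restr_eq (q := q) p (H.edge_vert (hab1 e.val e.prop))
          (H.edge_vert (hab1 e.val e.prop).symm) (fun _ : Fin n => a)]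
        exact rowL_const q p _ _ a
      have hcount := card_count Φ hsurj
      have hge : 2 ≤ Module.finrank ℝ (LinearMap.ker Φ) := by
        have := Submodule.finrank_mono hkerC
        rw [finrank_constMap_range] at this
        exact this
      rw [← Nat.card_coe_set_eq, Nat.card_eq_fintype_card,
        ← Nat.card_coe_set_eq, Nat.card_eq_fintype_card]
      omega
end

section
/- Let 1<q<∞, q≠2, and let (G',p') be a framework in (ℝ^2,‖·‖_q) obtained from a Henneberg 1-move adding vertex v_0 joined to v_1,v_2, with p_0,p_1,p_2 non-collinear. If every infinitesimal flex of (G,p) is constant, then every infinitesimal flex of (G',p') is constant. -/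
/-- The graph obtained from `G` by a Henneberg 1-move: a new vertex `0` is joined to
the two old vertices `v₁, v₂`. -/
def henneberg1 {n : ℕ} (G : SimpleGraph (Fin n)) (v₁ v₂ : Fin n) : SimpleGraph (Fin (n + 1)) :=
  SimpleGraph.fromRel (fun a b =>
    (∃ i j : Fin n, a = i.succ ∧ b = j.succ ∧ G.Adj i j) ∨
    (a = 0 ∧ (b = v₁.succ ∨ b = v₂.succ)))

noncomputable def spow (k : ℝ) (a : ℝ) : ℝ := Real.sign a * |a| ^ k

lemma spow_zero (k : ℝ) : spow k 0 = 0 := by simp [spow, Real.sign_zero]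

lemma spow_pos {k a : ℝ} (hk : 0 < k) (ha : 0 < a) : 0 < spow k a := by
  rw [spow, Real.sign_of_pos ha, one_mul]
  exact Real.rpow_pos_of_pos (abs_pos.mpr ha.ne') k

lemma spow_neg' {k a : ℝ} (hk : 0 < k) (ha : a < 0) : spow k a < 0 := by
  rw [spow, Real.sign_of_neg ha, neg_one_mul, neg_neg_iff_pos]
  exact Real.rpow_pos_of_pos (abs_pos.mpr ha.ne) k

lemma spow_mul (k : ℝ) (a b : ℝ) : spow k (a * b) = spow k a * spow k b := by
  have habs : |a * b| ^ k = |a| ^ k * |b| ^ k := by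
    rw [abs_mul, Real.mul_rpow (abs_nonneg a) (abs_nonneg b)]
  have hsign : Real.sign (a * b) = Real.sign a * Real.sign b := by
    rcases lt_trichotomy a 0 with ha | ha | ha <;> rcases lt_trichotomy b 0 with hb | hb | hb <;>
      simp [ha, hb, Real.sign_of_pos, Real.sign_of_neg, Real.sign_zero, mul_pos, mul_neg_of_pos_of_neg, mul_neg_of_neg_of_pos, mul_pos_of_neg_of_neg]
  simp only [spow, hsign, habs]; ring

lemma spow_injective {k : ℝ} (hk : 0 < k) : Function.Injective (spow k) := by
  intro a b hab
  rcases lt_trichotomy a 0 with ha | ha | ha <;> rcases lt_trichotomy b 0 with hb | hb | hb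
  · -- both neg
    have : |a| ^ k = |b| ^ k := by
      have := hab
      rw [spow, spow, Real.sign_of_neg ha, Real.sign_of_neg hb] at this
      linarith
    have h2 : |a| = |b| := by
      have := congrArg (fun x => x ^ k⁻¹) this
      simpa [← Real.rpow_natCast, ← Real.rpow_mul (abs_nonneg _),
        mul_inv_cancel₀ hk.ne', Real.rpow_one] using this
    rw [abs_of_neg ha, abs_of_neg hb] at h2; linarith
  · exact absurd hab (by rw [hb, spow_zero]; exact (spow_neg' hk ha).ne)
  · exact absurd hab (ne_of_lt (lt_trans (spow_neg' hk ha) (spow_pos hk hb)))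
  · exact absurd hab (by rw [ha, spow_zero]; exact (spow_neg' hk hb).ne')
  · rw [ha, hb]
  · exact absurd hab (by rw [ha, spow_zero]; exact fun h => (spow_pos hk hb).ne' h.symm)
  · exact absurd hab (ne_of_gt (lt_trans (spow_neg' hk hb) (spow_pos hk ha)))
  · exact absurd hab (by rw [hb, spow_zero]; exact (spow_pos hk ha).ne')
  · have : |a| ^ k = |b| ^ k := by
      have := hab
      rw [spow, spow, Real.sign_of_pos ha, Real.sign_of_pos hb] at this
      linarith
    have h2 : |a| = |b| := by
      have := congrArg (fun x => x ^ k⁻¹) this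
      simpa [← Real.rpow_mul (abs_nonneg _), mul_inv_cancel₀ hk.ne', Real.rpow_one] using this
    rw [abs_of_pos ha, abs_of_pos hb] at h2; linarith

lemma det_ne_of_li {x y : Fin 2 → ℝ} (h : LinearIndependent ℝ ![x, y]) :
    x 0 * y 1 - x 1 * y 0 ≠ 0 := by
  intro hdet
  rw [linearIndependent_fin2] at h
  obtain ⟨hy, hxy⟩ := h
  simp only [Matrix.cons_val_one, Matrix.head_cons, Matrix.cons_val_zero] at hy hxy
  have hy' : y 0 ≠ 0 ∨ y 1 ≠ 0 := by
    by_contra hc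
    push_neg at hc
    exact hy (funext fun i => by fin_cases i <;> simp [hc.1, hc.2])
  rcases hy' with h0 | h1
  · exact hxy (x 0 / y 0) (funext fun i => by
      fin_cases i <;> simp [smul_eq_mul] <;> field_simp <;> linarith)
  · exact hxy (x 1 / y 1) (funext fun i => by
      fin_cases i <;> simp [smul_eq_mul] <;> field_simp <;> linarith)

/-- If every infinitesimal flex of `(G,p)` is constant and the Henneberg 1-move places
the new vertex `p₀` non-collinearly with `p(v₁), p(v₂)`, then every infinitesimal flex
of the new framework is constant. Flexes are expressed via the rigidity-matrix
(orthogonality) condition for the `q`-norm, `1 < q < ∞`, `q ≠ 2`. -/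
theorem henneberg1_flexes_constant {q : ℝ} (hq1 : 1 < q) (hq2 : q ≠ 2)
    {n : ℕ} (G : SimpleGraph (Fin n)) (p : Fin n → Fin 2 → ℝ)
    (v₁ v₂ : Fin n) (hv : v₁ ≠ v₂) (p₀ : Fin 2 → ℝ)
    (hnc : LinearIndependent ℝ ![p₀ - p v₁, p₀ - p v₂])
    (hrig : ∀ u : Fin n → Fin 2 → ℝ,
      (∀ i j, G.Adj i j → dotp (signedPow (q - 1) (p i - p j)) (u i - u j) = 0) →
      ∃ a, ∀ i, u i = a) :
    ∀ p' : Fin (n + 1) → Fin 2 → ℝ, p' = Fin.cons p₀ p →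
    ∀ u : Fin (n + 1) → Fin 2 → ℝ,
      (∀ i j, (henneberg1 G v₁ v₂).Adj i j →
        dotp (signedPow (q - 1) (p' i - p' j)) (u i - u j) = 0) →
      ∃ a, ∀ i, u i = a := by
  intro p' hp' u hu
  subst hp'
  have hk0 : (0:ℝ) < q - 1 := by linarith
  obtain ⟨a, ha⟩ := hrig (fun i => u i.succ) (fun i j hij => by
    have hadj : (henneberg1 G v₁ v₂).Adj i.succ j.succ := by
      rw [henneberg1, SimpleGraph.fromRel_adj]
      exact ⟨fun h => hij.ne (Fin.succ_injective n h), Or.inl (Or.inl ⟨i, j, rfl, rfl, hij⟩)⟩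
    have := hu i.succ j.succ hadj
    simpa [Fin.cons_succ] using this)
  have h1 : (henneberg1 G v₁ v₂).Adj 0 v₁.succ := by
    rw [henneberg1, SimpleGraph.fromRel_adj]
    exact ⟨(Fin.succ_ne_zero v₁).symm, Or.inl (Or.inr ⟨rfl, Or.inl rfl⟩)⟩
  have h2 : (henneberg1 G v₁ v₂).Adj 0 v₂.succ := by
    rw [henneberg1, SimpleGraph.fromRel_adj]
    exact ⟨(Fin.succ_ne_zero v₂).symm, Or.inl (Or.inr ⟨rfl, Or.inr rfl⟩)⟩
  have e1 := hu 0 v₁.succ h1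
  have e2 := hu 0 v₂.succ h2
  rw [Fin.cons_zero, Fin.cons_succ, ha v₁] at e1
  rw [Fin.cons_zero, Fin.cons_succ, ha v₂] at e2
  set x := p₀ - p v₁ with hx
  set y := p₀ - p v₂ with hy
  have hdet : x 0 * y 1 - x 1 * y 0 ≠ 0 := det_ne_of_li hnc
  have hsp : ∀ (w : Fin 2 → ℝ) (i : Fin 2), signedPow (q-1) w i = spow (q-1) (w i) :=
    fun w i => rfl
  have hdet' : signedPow (q-1) x 0 * signedPow (q-1) y 1
      - signedPow (q-1) x 1 * signedPow (q-1) y 0 ≠ 0 := by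
    rw [hsp, hsp, hsp, hsp, ← spow_mul, ← spow_mul, sub_ne_zero]
    exact fun h => (sub_ne_zero.mp hdet) (spow_injective hk0 h)
  simp only [dotp, Fin.sum_univ_two, Pi.sub_apply] at e1 e2
  have hz0 : u 0 0 - a 0 = 0 := by
    have hmul : (u 0 0 - a 0) * (signedPow (q-1) x 0 * signedPow (q-1) y 1
        - signedPow (q-1) x 1 * signedPow (q-1) y 0) = 0 := by
      linear_combination signedPow (q-1) y 1 * e1 - signedPow (q-1) x 1 * e2
    rcases mul_eq_zero.mp hmul with h | h
    · exact h
    · exact absurd h hdet'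
  have hz1 : u 0 1 - a 1 = 0 := by
    have hmul : (u 0 1 - a 1) * (signedPow (q-1) x 0 * signedPow (q-1) y 1
        - signedPow (q-1) x 1 * signedPow (q-1) y 0) = 0 := by
      linear_combination signedPow (q-1) x 0 * e2 - signedPow (q-1) y 0 * e1
    rcases mul_eq_zero.mp hmul with h | h
    · exact h
    · exact absurd h hdet'
  refine ⟨a, fun i => ?_⟩
  refine Fin.cases ?_ (fun j => ha j) i
  funext j
  fin_cases j
  · show u 0 0 = a 0; linarith
  · show u 0 1 = a 1; linarith
end

section
/- Let ‖·‖_P be a polytopic norm on ℝ^d given by ‖a‖_P=max_{1≤k≤s}|a·b_k|, and let (G,p) be a well-positioned framework. Then u∈ℝ^{nd} is an infinitesimal flex of (G,p) if and only if for every edge v_iv_j with framework colour k, (u_i−u_j)·b_k=0. -/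
open Filter Asymptotics

lemma pNorm_eq_ciSup {d s : ℕ} (b : Fin s → Fin d → ℝ) (a : Fin d → ℝ) :
    pNorm b a = ⨆ k, |dotp (b k) a| := by
  have h : {x : ℝ | ∃ k, x = |dotp (b k) a|} = Set.range fun k => |dotp (b k) a| := by
    ext x; simp [Set.range, eq_comm]
  rw [pNorm, h, iSup]

lemma dotp_add_smul {d : ℕ} (w a v : Fin d → ℝ) (t : ℝ) :
    dotp w (a + t • v) = dotp w a + t * dotp w v := by
  simp only [dotp, Pi.add_apply, Pi.smul_apply, smul_eq_mul, mul_add, Finset.sum_add_distrib,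
    Finset.mul_sum]
  congr 1; apply Finset.sum_congr rfl; intros; ring

lemma abs_aux (C x : ℝ) (h : |x| ≤ |C|) : abs (|C + x| - |C|) = |x| := by
  rcases le_or_gt 0 C with hC | hC
  · rw [abs_of_nonneg hC] at h
    have h1 := abs_le.mp h
    rw [abs_of_nonneg hC, abs_of_nonneg (by linarith : (0:ℝ) ≤ C + x)]
    have : C + x - C = x := by ring
    rw [this]
  · rw [abs_of_neg hC] at h
    have h1 := abs_le.mp h
    rw [abs_of_neg hC, abs_of_nonpos (by linarith : C + x ≤ 0)]
    have : -(C + x) - -C = -x := by ring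
    rw [this, abs_neg]

lemma key {d s : ℕ} (b : Fin s → Fin d → ℝ) (a v : Fin d → ℝ) (k₀ : Fin s)
    (hmax : pNorm b a = |dotp (b k₀) a|)
    (hlt : ∀ k, k ≠ k₀ → |dotp (b k) a| < |dotp (b k₀) a|) :
    ((fun t : ℝ => pNorm b (a + t • v) - pNorm b a) =o[nhds (0:ℝ)] fun t : ℝ => t) ↔
      dotp (b k₀) v = 0 := by
  haveI : Nonempty (Fin s) := ⟨k₀⟩
  set C := dotp (b k₀) a with hC
  set D := dotp (b k₀) v with hD
  -- Step 1: eventually pNorm b (a + t • v) = |C + t * D|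
  have hev : ∀ᶠ t in nhds (0:ℝ), pNorm b (a + t • v) = |C + t * D| := by
    have hall : ∀ k, ∀ᶠ t in nhds (0:ℝ), k ≠ k₀ →
        |dotp (b k) a + t * dotp (b k) v| < |C + t * D| := by
      intro k
      rcases eq_or_ne k k₀ with rfl | hk
      · filter_upwards with t h; exact absurd rfl h
      · have hcont : Continuous fun t : ℝ =>
            |C + t * D| - |dotp (b k) a + t * dotp (b k) v| := by fun_prop
        have hopen : IsOpen {t : ℝ |
            0 < |C + t * D| - |dotp (b k) a + t * dotp (b k) v|} :=
          isOpen_lt continuous_const hcont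
        have h0 : (0:ℝ) ∈ {t : ℝ |
            0 < |C + t * D| - |dotp (b k) a + t * dotp (b k) v|} := by
          simp only [Set.mem_setOf_eq, mul_zero, zero_mul, add_zero]
          have := hlt k hk; linarith
        filter_upwards [hopen.mem_nhds h0] with t ht _
        linarith [ht]
    filter_upwards [(eventually_all).mpr hall] with t ht
    rw [pNorm_eq_ciSup]
    apply le_antisymm
    · apply ciSup_le
      intro k
      rw [dotp_add_smul]
      rcases eq_or_ne k k₀ with rfl | hk
      · exact le_of_eq rfl
      · exact (ht k hk).le
    · have := le_ciSup (Set.Finite.bddAbove (Set.finite_range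
        fun k => |dotp (b k) (a + t • v)|)) k₀
      rwa [dotp_add_smul] at this
  -- Step 2: eventually |f t| = |D| * |t|
  have hev2 : ∀ᶠ t in nhds (0:ℝ),
      |pNorm b (a + t • v) - pNorm b a| = |D| * |t| := by
    rcases eq_or_ne C 0 with hC0 | hC0
    · filter_upwards [hev] with t ht
      rw [ht, hmax, hC0]
      simp [abs_mul, mul_comm]
    · have hsmall : ∀ᶠ t in nhds (0:ℝ), |t * D| ≤ |C| := by
        have hcont : Continuous fun t : ℝ => |t * D| := by fun_prop
        have htend : Tendsto (fun t : ℝ => |t * D|) (nhds 0) (nhds 0) := by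
          have := hcont.tendsto 0; simpa using this
        exact htend.eventually_le_const (abs_pos.mpr hC0)
      filter_upwards [hev, hsmall] with t ht hts
      rw [ht, hmax]
      rw [abs_aux C (t * D) hts, abs_mul, mul_comm]
  -- Step 3
  constructor
  · intro h
    by_contra hD0
    rw [isLittleO_iff] at h
    have h2 := h (c := |D| / 2) (by positivity)
    have h3 := (h2.and hev2).mono fun t ⟨h1, h2⟩ => by
      rw [Real.norm_eq_abs, Real.norm_eq_abs] at h1
      rw [h2] at h1; exact h1
    rw [Metric.eventually_nhds_iff] at h3
    obtain ⟨δ, hδ, hball⟩ := h3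
    have := hball (show dist (δ/2) 0 < δ by
      rw [Real.dist_eq, sub_zero, abs_of_pos (by linarith : (0:ℝ) < δ/2)]; linarith)
    rw [abs_of_pos (by linarith : (0:ℝ) < δ/2)] at this
    nlinarith [abs_pos.mpr hD0]
  · intro hD0
    have : (fun t : ℝ => pNorm b (a + t • v) - pNorm b a) =ᶠ[nhds (0:ℝ)] fun _ => 0 := by
      filter_upwards [hev2] with t ht
      rw [hD0] at ht; simpa using ht
    exact this.trans_isLittleO (isLittleO_zero _ _)

/-- For a well-positioned framework with respect to a polytopic norm, `u` is an
infinitesimal flex iff `(u_i - u_j) · b_k = 0` for every edge `v_i v_j` of framework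
colour `k`, i.e. iff `R_P(G,p) u = 0`. -/
theorem isFlexP_iff_rigidityMatrix {d s n : ℕ}
    (b : Fin s → Fin d → ℝ) (hb : ∀ k, b k ≠ 0) (hbinj : Function.Injective b)
    (hbspan : Submodule.span ℝ (Set.range b) = ⊤)
    (G : SimpleGraph (Fin n)) (p : Fin n → Fin d → ℝ) (col : Fin n → Fin n → Fin s)
    (hwp : ∀ i j, G.Adj i j →
      ∀ k, pNorm b (p i - p j) = |dotp (b k) (p i - p j)| ↔ k = col i j)
    (u : Fin n → Fin d → ℝ) :
    IsFlexP b G p u ↔ ∀ i j, G.Adj i j → dotp (b (col i j)) (u i - u j) = 0 := by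
  unfold IsFlexP
  have main : ∀ i j, G.Adj i j →
      (((fun t : ℝ => pNorm b ((p i + t • u i) - (p j + t • u j)) - pNorm b (p i - p j))
        =o[nhds (0 : ℝ)] (fun t : ℝ => t)) ↔ dotp (b (col i j)) (u i - u j) = 0) := by
    intro i j hadj
    have heq : (fun t : ℝ =>
        pNorm b ((p i + t • u i) - (p j + t • u j)) - pNorm b (p i - p j))
        = fun t : ℝ => pNorm b ((p i - p j) + t • (u i - u j)) - pNorm b (p i - p j) := by
      funext t
      have : (p i + t • u i) - (p j + t • u j) = (p i - p j) + t • (u i - u j) := by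
        funext x
        simp only [Pi.add_apply, Pi.sub_apply, Pi.smul_apply, smul_eq_mul]
        ring
      rw [this]
    have hmax := (hwp i j hadj (col i j)).mpr rfl
    have hlt : ∀ k, k ≠ col i j →
        |dotp (b k) (p i - p j)| < |dotp (b (col i j)) (p i - p j)| := by
      intro k hk
      have hle : |dotp (b k) (p i - p j)| ≤ pNorm b (p i - p j) := by
        rw [pNorm_eq_ciSup]
        exact le_ciSup (f := fun k => |dotp (b k) (p i - p j)|)
          (Set.Finite.bddAbove (Set.finite_range _)) k
      have hne : pNorm b (p i - p j) ≠ |dotp (b k) (p i - p j)| :=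
        fun h => hk ((hwp i j hadj k).mp h)
      exact lt_of_le_of_ne (hmax ▸ hle) fun h => hne (by rw [hmax, h])
    rw [heq]
    exact key b (p i - p j) (u i - u j) (col i j) hmax hlt
  exact ⟨fun h i j hadj => (main i j hadj).mp (h i j hadj),
    fun h i j hadj => (main i j hadj).mpr (h i j hadj)⟩
end
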